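/- (Social Welfare Ordering) Suppose each T_i is an m-dimensional open interval domain and f is an implementable and neutral social choice function. Then the induced relation R^f on 𝔻 is a well-defined ordering: (i) for all x, y ∈ 𝔻 exactly one of x P^f y, x I^f y, y P^f x holds; (ii) x I^f x for all x ∈ 𝔻 (reflexivity); (iii) R^f is complete; and (iv) both P^f and I^f (hence R^f) are transitive. -/

import Mathlib

open Function

/-- A type profile: column `t a` is the utility vector in `ℝⁿ` for alternative `a`;
agent `i`'s type (row) is `fun a => t a i`. -/
abbrev Profile (n : ℕ) (A : Type*) := A → Fin n → ℝ

/-- Payment rule `p` implements `f` in dominant strategies on the domain `Dom`: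
no agent `i` can gain by a unilateral deviation (a change of his own row only). -/
def ImplementsOn {n : ℕ} {A : Type*} (Dom : Set (Profile n A)) (f : Profile n A → A)
    (p : Profile n A → Fin n → ℝ) : Prop :=
  ∀ t ∈ Dom, ∀ s ∈ Dom, ∀ i : Fin n,
    (∀ j : Fin n, j ≠ i → ∀ a : A, s a j = t a j) →
    t (f t) i + p t i ≥ t (f s) i + p s i

/-- `f` is implementable in dominant strategies on `Dom`. -/
def ImplementableOn {n : ℕ} {A : Type*} (Dom : Set (Profile n A))
    (f : Profile n A → A) : Prop :=
  ∃ p, ImplementsOn Dom f p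

/-- The choice set `C^f(t)`: alternatives `a` such that raising the column of `a`
by any strictly positive `ε` (staying inside the domain) makes `f` choose `a`. -/
def ChoiceSetOn {n : ℕ} {A : Type*} [DecidableEq A] (Dom : Set (Profile n A))
    (f : Profile n A → A) (t : Profile n A) : Set A :=
  {a | ∀ ε : Fin n → ℝ, (∀ i, 0 < ε i) →
    Function.update t a (t a + ε) ∈ Dom →
    f (Function.update t a (t a + ε)) = a}

/-- `f` is neutral: permuting the columns of a profile permutes the choice set
accordingly (the profile `s` induced by `ρ` has `s^{ρ a} = t^a`, i.e. `s b = t (ρ⁻¹ b)`). -/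
def NeutralOn {n : ℕ} {A : Type*} [DecidableEq A] (Dom : Set (Profile n A))
    (f : Profile n A → A) : Prop :=
  ∀ t ∈ Dom, ∀ ρ : Equiv.Perm A,
    ChoiceSetOn Dom f (fun b => t (ρ.symm b)) = ρ '' ChoiceSetOn Dom f t

/-- The `m`-dimensional open interval domain: agent `i`'s values all lie in the
open interval `(α i, β i)` (endpoints possibly infinite). -/
def IntervalDom (n : ℕ) (A : Type*) (α β : Fin n → EReal) : Set (Profile n A) :=
  {t | ∀ (a : A) (i : Fin n), α i < (t a i : EReal) ∧ (t a i : EReal) < β i}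

/-- The set `𝔻` of feasible utility vectors. -/
def DSet {n : ℕ} (α β : Fin n → EReal) : Set (Fin n → ℝ) :=
  {x | ∀ i : Fin n, α i < (x i : EReal) ∧ (x i : EReal) < β i}

/-- The strict relation `P^f` induced by `f` on utility vectors. -/
def PRel {n : ℕ} {A : Type*} [DecidableEq A] (Dom : Set (Profile n A))
    (f : Profile n A → A) (x y : Fin n → ℝ) : Prop :=
  ∃ t ∈ Dom, ∃ a b : A, a ≠ b ∧ t a = x ∧ t b = y ∧
    a ∈ ChoiceSetOn Dom f t ∧ b ∉ ChoiceSetOn Dom f t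

/-- The indifference relation `I^f` induced by `f` on utility vectors. -/
def IRel {n : ℕ} {A : Type*} [DecidableEq A] (Dom : Set (Profile n A))
    (f : Profile n A → A) (x y : Fin n → ℝ) : Prop :=
  ∃ t ∈ Dom, ∃ a b : A, a ≠ b ∧ t a = x ∧ t b = y ∧
    a ∈ ChoiceSetOn Dom f t ∧ b ∈ ChoiceSetOn Dom f t

/-- The induced social welfare relation `R^f`. -/
def RRel {n : ℕ} {A : Type*} [DecidableEq A] (Dom : Set (Profile n A))
    (f : Profile n A → A) (x y : Fin n → ℝ) : Prop :=
  PRel Dom f x y ∨ IRel Dom f x y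

/-!
Implementability gives weak monotonicity for unilateral deviations; changing the rows one
agent at a time upgrades it to: if `f S = e` and passing from `S` to `Q` raises column `e`
strictly more than every other column, for every agent, then `f Q = e`. Since the domain is
open, this rules out `e₁ ∈ C(P₁)`, `e₂ ∈ C(P₂)` with `e₁ ≠ e₂`, `P₁ e₁ ≤ P₂ e₁` and
`P₂ e₂ ≪ P₁ e₂`: small lifts of `e₁` in `P₁` and of `e₂` in `P₂` both lead to a common profile.
Consequently, once `a ∈ C(t)`, whether `b ∈ C(t)` depends only on the columns `t a` and `t b`,
and by neutrality not on the labels `a`, `b`. So `x P y` excludes, and `x I y` forces, the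
column `y` being chosen next to a chosen `x` in every profile; the ordering properties follow by
inspecting profiles with two or three distinct columns, whose choice set contains `f t`.
-/

open Filter Topology

section SocialWelfare

variable {n : ℕ} {A : Type*} {α β : Fin n → EReal} {f : Profile n A → A}
  {p : Profile n A → Fin n → ℝ}

local notation "𝒯" => IntervalDom n A α β

theorem const_mem_intervalDom {x : Fin n → ℝ} (hx : x ∈ DSet α β) : (fun _ : A => x) ∈ 𝒯 :=
  fun _ => hx

theorem ordConnected_dSet : (DSet α β).OrdConnected :=
  ⟨fun _ hx _ hy _ hz i =>
    ⟨(hx i).1.trans_le (EReal.coe_le_coe_iff.2 (hz.1 i)),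
      (EReal.coe_le_coe_iff.2 (hz.2 i)).trans_lt (hy i).2⟩⟩

theorem isOpen_intervalDom [Finite A] : IsOpen 𝒯 := by
  have : 𝒯 = ⋂ a, ⋂ i, {t : Profile n A | α i < (t a i : EReal) ∧ (t a i : EReal) < β i} := by
    ext t; simp [IntervalDom]
  rw [this]
  refine isOpen_iInter_of_finite fun a => isOpen_iInter_of_finite fun i => ?_
  have hcont : Continuous fun t : Profile n A => (t a i : EReal) :=
    continuous_coe_real_ereal.comp ((continuous_apply i).comp (continuous_apply a))
  exact (isOpen_lt continuous_const hcont).inter (isOpen_lt hcont continuous_const)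

theorem ImplementsOn.sub_le_sub {Dom : Set (Profile n A)} (hp : ImplementsOn Dom f p)
    {t s : Profile n A} (ht : t ∈ Dom) (hs : s ∈ Dom) (i : Fin n)
    (hts : ∀ j, j ≠ i → ∀ a, s a j = t a j) :
    s (f t) i - t (f t) i ≤ s (f s) i - t (f s) i := by
  have h₁ := hp t ht s hs i hts
  have h₂ := hp s hs t ht i fun j hj a => (hts j hj a).symm
  linarith

theorem ImplementsOn.apply_eq_of_forall_sub_lt (hp : ImplementsOn 𝒯 f p) {S Q : Profile n A}
    (hS : S ∈ 𝒯) (hQ : Q ∈ 𝒯) {e : A} (hfS : f S = e)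
    (hgain : ∀ g, g ≠ e → ∀ i, Q g i - S g i < Q e i - S e i) : f Q = e := by
  let H : Finset (Fin n) → Profile n A := fun K g i => if i ∈ K then Q g i else S g i
  have hH : ∀ K, H K ∈ 𝒯 := fun K g i => by
    simp only [H]; split_ifs
    exacts [hQ g i, hS g i]
  have hfH : ∀ K, f (H K) = e := by
    intro K
    induction K using Finset.induction_on with
    | empty => simpa [H] using hfS
    | insert i K hiK ih =>
      by_contra hne
      have hrow : ∀ j, j ≠ i → ∀ a, H (insert i K) a j = H K a j := fun j hj a => by
        simp [H, hj]
      have := hp.sub_le_sub (hH K) (hH _) i hrow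
      simp only [ih, H, Finset.mem_insert_self, if_true, hiK, if_false] at this
      exact (hgain _ hne i).not_ge this
  simpa [H] using hfH Finset.univ

variable [DecidableEq A]

theorem update_mem_intervalDom {t : Profile n A} (ht : t ∈ 𝒯) (a : A) {x : Fin n → ℝ}
    (hx : x ∈ DSet α β) : Function.update t a x ∈ 𝒯 := by
  intro e
  rcases eq_or_ne e a with rfl | he
  · rw [Function.update_self]; exact hx
  · rw [Function.update_of_ne he]; exact ht e

theorem ImplementsOn.apply_mem_choiceSetOn (hp : ImplementsOn 𝒯 f p) {t : Profile n A}
    (ht : t ∈ 𝒯) : f t ∈ ChoiceSetOn 𝒯 f t := fun ε hε hmem =>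
  hp.apply_eq_of_forall_sub_lt ht hmem rfl fun g hg i => by simpa [hg] using hε i

theorem ImplementableOn.apply_mem_choiceSetOn (hf : ImplementableOn 𝒯 f) {t : Profile n A}
    (ht : t ∈ 𝒯) : f t ∈ ChoiceSetOn 𝒯 f t :=
  hf.elim fun _ hp => hp.apply_mem_choiceSetOn ht

theorem ImplementsOn.eq_of_mem_choiceSetOn [Finite A] (hp : ImplementsOn 𝒯 f p)
    {P₁ P₂ : Profile n A} (hP₁ : P₁ ∈ 𝒯) (hP₂ : P₂ ∈ 𝒯) {e₁ e₂ : A}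
    (h₁ : e₁ ∈ ChoiceSetOn 𝒯 f P₁) (h₂ : e₂ ∈ ChoiceSetOn 𝒯 f P₂)
    (hle : P₁ e₁ ≤ P₂ e₁) (hlt : ∀ i, P₂ e₂ i < P₁ e₂ i) : e₁ = e₂ := by
  by_contra hne
  set w : Fin n → ℝ := P₁ e₂ - P₂ e₂
  let S₁ : ℝ → Profile n A := fun c => Function.update P₁ e₁ (P₁ e₁ + c • w)
  let S₂ : ℝ → Profile n A := fun c => Function.update P₂ e₂ (P₂ e₂ + c • w)
  let Q : ℝ → Profile n A := fun c g =>
    if g = e₁ then P₁ e₁ - c • w else if g = e₂ then P₂ e₂ + c • w else P₁ g ⊓ P₂ g - (3 * c) • w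
  have hev : ∀ R : ℝ → Profile n A, Continuous R → R 0 ∈ 𝒯 → ∀ᶠ c in 𝓝[>] 0, R c ∈ 𝒯 :=
    fun R hR h0 => ((hR.tendsto 0).eventually_mem (isOpen_intervalDom.mem_nhds h0)).filter_mono
      nhdsWithin_le_nhds
  have hQ₀ : Q 0 ∈ 𝒯 := fun g i => by
    simp only [Q, zero_smul, mul_zero, sub_zero, add_zero]
    split_ifs
    · exact hP₁ e₁ i
    · exact hP₂ e₂ i
    · rcases min_choice (P₁ g i) (P₂ g i) with h | h
      · simpa [Pi.inf_apply, h] using hP₁ g i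
      · simpa [Pi.inf_apply, h] using hP₂ g i
  have hQcont : Continuous Q := continuous_pi fun g => by
    simp only [Q]; split_ifs <;> fun_prop
  have hsmall : ∀ᶠ c in 𝓝[>] (0 : ℝ), c ∈ Set.Ioo 0 (1 / 3) := Ioo_mem_nhdsGT (by norm_num)
  obtain ⟨c, ⟨hc₀, hc₁⟩, hS₁, hS₂, hQ⟩ := (hsmall.and
    ((hev S₁ (by fun_prop) (by simpa [S₁] using hP₁)).and
    ((hev S₂ (by fun_prop) (by simpa [S₂] using hP₂)).and (hev Q hQcont hQ₀)))).exists
  have hw₀ : ∀ i, 0 < w i := fun i => sub_pos.2 (hlt i)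
  have hτ : ∀ i, 0 < c * w i := fun i => mul_pos hc₀ (hw₀ i)
  have hτw : ∀ i, 3 * (c * w i) < w i := fun i => by nlinarith [hw₀ i]
  have hfQ₁ : f (Q c) = e₁ := hp.apply_eq_of_forall_sub_lt hS₁ hQ (h₁ _ hτ hS₁) fun g hg i => by
    simp only [Q, S₁, Function.update_self, Function.update_of_ne hg, if_pos rfl, if_neg hg]
    split_ifs with hg₂
    · subst hg₂
      simp only [Pi.add_apply, Pi.sub_apply, Pi.smul_apply, smul_eq_mul]
      linarith [hτ i, hτw i, show w i = P₁ g i - P₂ g i from rfl]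
    · simp only [Pi.add_apply, Pi.sub_apply, Pi.smul_apply, Pi.inf_apply, smul_eq_mul]
      linarith [hτ i, inf_le_left (a := P₁ g i) (b := P₂ g i)]
  have hfQ₂ : f (Q c) = e₂ := hp.apply_eq_of_forall_sub_lt hS₂ hQ (h₂ _ hτ hS₂) fun g hg i => by
    simp only [Q, S₂, Function.update_self, Function.update_of_ne hg, if_neg (Ne.symm hne),
      if_neg hg]
    split_ifs with hg₁
    · subst hg₁
      simp only [Pi.add_apply, Pi.sub_apply, Pi.smul_apply, smul_eq_mul]
      linarith [hτ i, hle i]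
    · simp only [Pi.add_apply, Pi.sub_apply, Pi.smul_apply, Pi.inf_apply, smul_eq_mul]
      linarith [hτ i, inf_le_right (a := P₁ g i) (b := P₂ g i)]
  exact hne (hfQ₁.symm.trans hfQ₂)

theorem ImplementsOn.mem_choiceSetOn_update_of_lt [Finite A] (hp : ImplementsOn 𝒯 f p)
    {t : Profile n A} (ht : t ∈ 𝒯) {a b c : A} (hab : a ≠ b) (hcb : c ≠ b)
    {y y' : Fin n → ℝ} (hy : ∀ i, y i < y' i) (ha : a ∈ ChoiceSetOn 𝒯 f t)
    (hc : c ∈ ChoiceSetOn 𝒯 f (Function.update t b y')) (hmem' : Function.update t b y' ∈ 𝒯) :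
    a ∈ ChoiceSetOn 𝒯 f (Function.update t b y) := by
  intro ε hε hP
  set P := Function.update (Function.update t b y) a (Function.update t b y a + ε)
  have hPa : P a = t a + ε := by simp [P, hab]
  have hP_of_ne : ∀ g, g ≠ a → g ≠ b → P g = t g := fun g hga hgb => by simp [P, hga, hgb]
  have hfP := hp.apply_mem_choiceSetOn hP
  by_contra hne
  rcases eq_or_ne (f P) b with hfb | hfb
  · refine hcb (hp.eq_of_mem_choiceSetOn hmem' hP hc (hfb ▸ hfP) ?_ fun i => ?_)
    · rw [Function.update_of_ne hcb]
      rcases eq_or_ne c a with rfl | hca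
      · rw [hPa]; exact fun i => by simp [(hε i).le]
      · rw [hP_of_ne c hca hcb]
    · simpa [P, Ne.symm hab] using hy i
  · refine hne (hp.eq_of_mem_choiceSetOn hP ht hfP ha (hP_of_ne _ hne hfb).le fun i => ?_)
    simpa [hPa] using hε i

theorem ImplementsOn.mem_choiceSetOn_of_eq_of_eq [Finite A] (hp : ImplementsOn 𝒯 f p)
    {t s : Profile n A} (ht : t ∈ 𝒯) (hs : s ∈ 𝒯) {a b : A} (ha : a ∈ ChoiceSetOn 𝒯 f t)
    (hb : b ∈ ChoiceSetOn 𝒯 f s) (hta : t a = s a) (htb : t b = s b) :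
    b ∈ ChoiceSetOn 𝒯 f t := by
  intro δ hδ hT
  by_contra hne
  have hab : a ≠ b := by rintro rfl; exact hne (ha δ hδ hT)
  set y : Fin n → ℝ := fun i => t b i + δ i / 2
  have hTb : t b + δ ∈ DSet α β := by
    have := hT b
    rwa [Function.update_self] at this
  have hyD : y ∈ DSet α β := ordConnected_dSet.out (ht b) hTb
    ⟨fun i => by simp only [y]; linarith [hδ i],
      fun i => by simp only [y, Pi.add_apply]; linarith [hδ i]⟩
  have hV := update_mem_intervalDom ht b hyD
  have haV : a ∈ ChoiceSetOn 𝒯 f (Function.update t b y) :=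
    hp.mem_choiceSetOn_update_of_lt ht hab hne (fun i => by simp [y, hδ i])
    ha (hp.apply_mem_choiceSetOn hT) hT
  refine hab (hp.eq_of_mem_choiceSetOn hV hs haV hb (by simp [hab, hta]) fun i => ?_)
  simp [y, ← htb, hδ i]

theorem NeutralOn.mem_choiceSetOn_perm_iff {Dom : Set (Profile n A)} (hneu : NeutralOn Dom f)
    {t : Profile n A} (ht : t ∈ Dom) (ρ : Equiv.Perm A) {e : A} :
    ρ e ∈ ChoiceSetOn Dom f (fun b => t (ρ.symm b)) ↔ e ∈ ChoiceSetOn Dom f t := by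
  rw [hneu t ht ρ]
  exact ρ.injective.mem_set_image

theorem NeutralOn.mem_choiceSetOn_of_eq {Dom : Set (Profile n A)} (hneu : NeutralOn Dom f)
    {t : Profile n A} (ht : t ∈ Dom) {g h : A} (hgh : t g = t h)
    (hg : g ∈ ChoiceSetOn Dom f t) : h ∈ ChoiceSetOn Dom f t := by
  have hswap : (fun e => t (Equiv.swap g h e)) = t := by
    funext e
    rw [Equiv.swap_apply_def]
    split_ifs <;> simp_all
  have := (hneu.mem_choiceSetOn_perm_iff ht (Equiv.swap g h)).2 hg
  rwa [Equiv.symm_swap, hswap, Equiv.swap_apply_left] at this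

theorem exists_perm_apply_eq_apply_eq {a b a' b' : A} (hab : a ≠ b) (hab' : a' ≠ b') :
    ∃ ρ : Equiv.Perm A, ρ a' = a ∧ ρ b' = b := by
  refine ⟨(Equiv.swap a a').trans (Equiv.swap b (Equiv.swap a a' b')), ?_, by simp⟩
  have hb' : Equiv.swap a a' b' ≠ a := by
    rw [Ne, Equiv.swap_apply_eq_iff, Equiv.swap_apply_left]
    exact hab'.symm
  rw [Equiv.trans_apply, Equiv.swap_apply_right]
  exact Equiv.swap_apply_of_ne_of_ne hab hb'.symm

theorem NeutralOn.mem_choiceSetOn_of_eq_of_eq [Finite A] (hneu : NeutralOn 𝒯 f)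
    (hf : ImplementableOn 𝒯 f) {t s : Profile n A} (ht : t ∈ 𝒯) (hs : s ∈ 𝒯) {a b a' b' : A}
    (hab : a ≠ b) (hab' : a' ≠ b') (hta : t a = s a') (htb : t b = s b')
    (ha : a ∈ ChoiceSetOn 𝒯 f t) (hb' : b' ∈ ChoiceSetOn 𝒯 f s) : b ∈ ChoiceSetOn 𝒯 f t := by
  obtain ⟨p, hp⟩ := hf
  obtain ⟨ρ, hρa, hρb⟩ := exists_perm_apply_eq_apply_eq hab hab'
  refine hp.mem_choiceSetOn_of_eq_of_eq ht (s := fun e => s (ρ.symm e)) (fun e => hs _) ha ?_ ?_ ?_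
  · rw [← hρb]
    exact (hneu.mem_choiceSetOn_perm_iff hs ρ).2 hb'
  · rw [hta, ← hρa, Equiv.symm_apply_apply]
  · rw [htb, ← hρb, Equiv.symm_apply_apply]

variable {x y z : Fin n → ℝ}

theorem PRel.not_mem_choiceSetOn [Finite A] (hxy : PRel 𝒯 f x y) (hf : ImplementableOn 𝒯 f)
    (hneu : NeutralOn 𝒯 f) {u : Profile n A} (hu : u ∈ 𝒯) {g h : A} (hgh : g ≠ h)
    (hug : u g = x) (huh : u h = y) : h ∉ ChoiceSetOn 𝒯 f u := by
  obtain ⟨t, ht, a, b, hab, hta, htb, ha, hb⟩ := hxy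
  exact fun hh => hb (hneu.mem_choiceSetOn_of_eq_of_eq hf ht hu hab hgh (hta.trans hug.symm)
    (htb.trans huh.symm) ha hh)

theorem IRel.mem_choiceSetOn_iff [Finite A] (hxy : IRel 𝒯 f x y) (hf : ImplementableOn 𝒯 f)
    (hneu : NeutralOn 𝒯 f) {u : Profile n A} (hu : u ∈ 𝒯) {g h : A} (hgh : g ≠ h)
    (hug : u g = x) (huh : u h = y) : g ∈ ChoiceSetOn 𝒯 f u ↔ h ∈ ChoiceSetOn 𝒯 f u := by
  obtain ⟨s, hs, a, b, hab, hsa, hsb, ha, hb⟩ := hxy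
  exact ⟨fun hg => hneu.mem_choiceSetOn_of_eq_of_eq hf hu hs hgh hab (hug.trans hsa.symm)
      (huh.trans hsb.symm) hg hb,
    fun hh => hneu.mem_choiceSetOn_of_eq_of_eq hf hu hs hgh.symm hab.symm (huh.trans hsb.symm)
      (hug.trans hsa.symm) hh ha⟩

theorem RRel.mem_choiceSetOn_of_mem [Finite A] (hxy : RRel 𝒯 f x y) (hf : ImplementableOn 𝒯 f)
    (hneu : NeutralOn 𝒯 f) {u : Profile n A} (hu : u ∈ 𝒯) {g h : A} (hgh : g ≠ h)
    (hug : u g = x) (huh : u h = y) (hh : h ∈ ChoiceSetOn 𝒯 f u) : g ∈ ChoiceSetOn 𝒯 f u :=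
  hxy.elim (fun hP => absurd hh (hP.not_mem_choiceSetOn hf hneu hu hgh hug huh))
    fun hI => (hI.mem_choiceSetOn_iff hf hneu hu hgh hug huh).2 hh

theorem PRel.not_iRel [Finite A] (hxy : PRel 𝒯 f x y) (hf : ImplementableOn 𝒯 f)
    (hneu : NeutralOn 𝒯 f) : ¬ IRel 𝒯 f x y :=
  fun ⟨_, hs, _, _, hab, hsa, hsb, _, hb⟩ => hxy.not_mem_choiceSetOn hf hneu hs hab hsa hsb hb

theorem PRel.not_rRel [Finite A] (hxy : PRel 𝒯 f x y) (hf : ImplementableOn 𝒯 f)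
    (hneu : NeutralOn 𝒯 f) : ¬ RRel 𝒯 f y x := by
  rintro (⟨u, hu, a, b, hab, hua, hub, ha, -⟩ | ⟨u, hu, a, b, hab, hua, hub, ha, -⟩) <;>
    exact hxy.not_mem_choiceSetOn hf hneu hu hab.symm hub hua ha

theorem pRel_or_iRel_or_pRel [Nontrivial A] (hf : ImplementableOn 𝒯 f) (hneu : NeutralOn 𝒯 f)
    (hx : x ∈ DSet α β) (hy : y ∈ DSet α β) :
    PRel 𝒯 f x y ∨ IRel 𝒯 f x y ∨ PRel 𝒯 f y x := by
  obtain ⟨a, b, hab⟩ := exists_pair_ne A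
  set T := Function.update (fun _ : A => x) b y
  have hT : T ∈ 𝒯 := update_mem_intervalDom (const_mem_intervalDom hx) b hy
  have hTa : T a = x := by simp [T, hab]
  have hTb : T b = y := by simp [T]
  have hfT := hf.apply_mem_choiceSetOn hT
  by_cases hb : b ∈ ChoiceSetOn 𝒯 f T
  · by_cases ha : a ∈ ChoiceSetOn 𝒯 f T
    · exact Or.inr (Or.inl ⟨T, hT, a, b, hab, hTa, hTb, ha, hb⟩)
    · exact Or.inr (Or.inr ⟨T, hT, b, a, hab.symm, hTb, hTa, hb, ha⟩)
  · have hfb : f T ≠ b := fun h => hb (h ▸ hfT)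
    have ha := hneu.mem_choiceSetOn_of_eq hT (h := a) (by simp [T, hfb, hab]) hfT
    exact Or.inl ⟨T, hT, a, b, hab, hTa, hTb, ha, hb⟩

theorem iRel_refl [Nontrivial A] (hf : ImplementableOn 𝒯 f) (hneu : NeutralOn 𝒯 f)
    (hx : x ∈ DSet α β) : IRel 𝒯 f x x := by
  obtain ⟨a, b, hab⟩ := exists_pair_ne A
  have hT : (fun _ : A => x) ∈ 𝒯 := const_mem_intervalDom hx
  have hfT := hf.apply_mem_choiceSetOn hT
  exact ⟨_, hT, a, b, hab, rfl, rfl, hneu.mem_choiceSetOn_of_eq hT rfl hfT,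
    hneu.mem_choiceSetOn_of_eq hT rfl hfT⟩

theorem exists_three_column_profile [Fintype A] (hA : 2 < Fintype.card A) (hx : x ∈ DSet α β)
    (hy : y ∈ DSet α β) (hz : z ∈ DSet α β) :
    ∃ u ∈ 𝒯, ∃ a b c : A, a ≠ b ∧ c ≠ a ∧ c ≠ b ∧ u a = x ∧ u b = y ∧
      ∀ e, e ≠ a → e ≠ b → u e = z := by
  obtain ⟨a, b, c, hab, hac, hbc⟩ := Fintype.two_lt_card_iff.1 hA
  refine ⟨Function.update (Function.update (fun _ => z) b y) a x,
    update_mem_intervalDom (update_mem_intervalDom (const_mem_intervalDom hz) b hy) a hx,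
    a, b, c, hab, hac.symm, hbc.symm, by simp, by simp [hab.symm], fun e hea heb => by
      simp [hea, heb]⟩

/-- Whatever `f` picks drags `b`, and then `a`, into the choice set. -/
theorem RRel.mem_choiceSetOn_of_rRel [Finite A] (hxy : RRel 𝒯 f x y) (hyz : RRel 𝒯 f y z)
    (hf : ImplementableOn 𝒯 f) (hneu : NeutralOn 𝒯 f) {u : Profile n A} (hu : u ∈ 𝒯)
    {a b : A} (hab : a ≠ b) (hua : u a = x) (hub : u b = y)
    (huz : ∀ e, e ≠ a → e ≠ b → u e = z) : a ∈ ChoiceSetOn 𝒯 f u := by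
  have hfu := hf.apply_mem_choiceSetOn hu
  by_cases hfa : f u = a
  · exact hfa ▸ hfu
  apply hxy.mem_choiceSetOn_of_mem hf hneu hu hab hua hub
  by_cases hfb : f u = b
  · exact hfb ▸ hfu
  exact hyz.mem_choiceSetOn_of_mem hf hneu hu (Ne.symm hfb) hub (huz _ hfa hfb) hfu

theorem PRel.trans_rRel [Fintype A] (hA : 2 < Fintype.card A) (hxy : PRel 𝒯 f x y)
    (hyz : RRel 𝒯 f y z) (hf : ImplementableOn 𝒯 f) (hneu : NeutralOn 𝒯 f) (hx : x ∈ DSet α β)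
    (hy : y ∈ DSet α β) (hz : z ∈ DSet α β) : PRel 𝒯 f x z := by
  obtain ⟨u, hu, a, b, c, hab, hca, hcb, hua, hub, huz⟩ :=
    exists_three_column_profile hA hx hy hz
  refine ⟨u, hu, a, c, hca.symm, hua, huz c hca hcb,
    RRel.mem_choiceSetOn_of_rRel (Or.inl hxy) hyz hf hneu hu hab hua hub huz, fun hc => ?_⟩
  exact hxy.not_mem_choiceSetOn hf hneu hu hab hua hub
    (hyz.mem_choiceSetOn_of_mem hf hneu hu hcb.symm hub (huz c hca hcb) hc)

theorem RRel.trans_pRel [Fintype A] (hA : 2 < Fintype.card A) (hxy : RRel 𝒯 f x y)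
    (hyz : PRel 𝒯 f y z) (hf : ImplementableOn 𝒯 f) (hneu : NeutralOn 𝒯 f) (hx : x ∈ DSet α β)
    (hy : y ∈ DSet α β) (hz : z ∈ DSet α β) : PRel 𝒯 f x z := by
  obtain ⟨u, hu, a, b, c, hab, hca, hcb, hua, hub, huz⟩ :=
    exists_three_column_profile hA hx hy hz
  exact ⟨u, hu, a, c, hca.symm, hua, huz c hca hcb,
    hxy.mem_choiceSetOn_of_rRel (Or.inl hyz) hf hneu hu hab hua hub huz,
    hyz.not_mem_choiceSetOn hf hneu hu hcb.symm hub (huz c hca hcb)⟩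

theorem IRel.trans [Fintype A] (hA : 2 < Fintype.card A) (hxy : IRel 𝒯 f x y)
    (hyz : IRel 𝒯 f y z) (hf : ImplementableOn 𝒯 f) (hneu : NeutralOn 𝒯 f) (hx : x ∈ DSet α β)
    (hy : y ∈ DSet α β) (hz : z ∈ DSet α β) : IRel 𝒯 f x z := by
  obtain ⟨u, hu, a, b, c, hab, hca, hcb, hua, hub, huz⟩ :=
    exists_three_column_profile hA hx hy hz
  have ha := RRel.mem_choiceSetOn_of_rRel (Or.inr hxy) (Or.inr hyz) hf hneu hu hab hua hub huz
  have hb := (hxy.mem_choiceSetOn_iff hf hneu hu hab hua hub).1 ha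
  exact ⟨u, hu, a, c, hca.symm, hua, huz c hca hcb, ha,
    (hyz.mem_choiceSetOn_iff hf hneu hu hcb.symm hub (huz c hca hcb)).1 hb⟩

end SocialWelfare

theorem induced_social_welfare_ordering_general
    {n : ℕ} {A : Type*} [Fintype A] [DecidableEq A]
    (hA : 3 ≤ Fintype.card A)
    (α β : Fin n → EReal)
    (f : Profile n A → A)
    (hf : ImplementableOn (IntervalDom n A α β) f)
    (hneu : NeutralOn (IntervalDom n A α β) f) :
    (∀ x ∈ DSet α β, ∀ y ∈ DSet α β,
      (PRel (IntervalDom n A α β) f x y ∨ IRel (IntervalDom n A α β) f x y ∨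
        PRel (IntervalDom n A α β) f y x) ∧
      ¬ (PRel (IntervalDom n A α β) f x y ∧ IRel (IntervalDom n A α β) f x y) ∧
      ¬ (PRel (IntervalDom n A α β) f x y ∧ PRel (IntervalDom n A α β) f y x) ∧
      ¬ (IRel (IntervalDom n A α β) f x y ∧ PRel (IntervalDom n A α β) f y x)) ∧
    (∀ x ∈ DSet α β, IRel (IntervalDom n A α β) f x x) ∧
    (∀ x ∈ DSet α β, ∀ y ∈ DSet α β,
      RRel (IntervalDom n A α β) f x y ∨ RRel (IntervalDom n A α β) f y x) ∧
    (∀ x ∈ DSet α β, ∀ y ∈ DSet α β, ∀ z ∈ DSet α β,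
      (PRel (IntervalDom n A α β) f x y → PRel (IntervalDom n A α β) f y z →
        PRel (IntervalDom n A α β) f x z) ∧
      (IRel (IntervalDom n A α β) f x y → IRel (IntervalDom n A α β) f y z →
        IRel (IntervalDom n A α β) f x z) ∧
      (RRel (IntervalDom n A α β) f x y → RRel (IntervalDom n A α β) f y z →
        RRel (IntervalDom n A α β) f x z)) := by
  have : Nontrivial A := Fintype.one_lt_card_iff_nontrivial.1 (by omega)
  refine ⟨fun x hx y hy => ⟨pRel_or_iRel_or_pRel hf hneu hx hy,
      fun h => h.1.not_iRel hf hneu h.2, fun h => h.2.not_rRel hf hneu (Or.inl h.1),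
      fun h => h.2.not_rRel hf hneu (Or.inr h.1)⟩,
    fun x hx => iRel_refl hf hneu hx, fun x hx y hy => ?_, fun x hx y hy z hz => ?_⟩
  · rcases pRel_or_iRel_or_pRel hf hneu hx hy with h | h | h
    exacts [Or.inl (Or.inl h), Or.inl (Or.inr h), Or.inr (Or.inl h)]
  · refine ⟨fun hxy hyz => hxy.trans_rRel hA (Or.inl hyz) hf hneu hx hy hz,
      fun hxy hyz => hxy.trans hA hyz hf hneu hx hy hz, ?_⟩
    rintro (hxy | hxy) hyz
    · exact Or.inl (hxy.trans_rRel hA hyz hf hneu hx hy hz)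
    rcases hyz with hyz | hyz
    · exact Or.inl (RRel.trans_pRel hA (Or.inr hxy) hyz hf hneu hx hy hz)
    · exact Or.inr (hxy.trans hA hyz hf hneu hx hy hz)

/-- Social Welfare Ordering: the relation `R^f` induced on `𝔻` by an
implementable and neutral `f` is a well-defined ordering: (i) trichotomy (exactly one
of `x P^f y`, `x I^f y`, `y P^f x`), (ii) reflexivity of `I^f`, (iii) completeness of
`R^f`, and (iv) transitivity of `P^f`, `I^f` and `R^f`. -/
theorem induced_social_welfare_ordering
    {n : ℕ} {A : Type*} [Fintype A] [DecidableEq A]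
    (hn : 0 < n) (hA : 3 ≤ Fintype.card A)
    (α β : Fin n → EReal) (hαβ : ∀ i, α i < β i)
    (f : Profile n A → A)
    (hf : ImplementableOn (IntervalDom n A α β) f)
    (hneu : NeutralOn (IntervalDom n A α β) f) :
    (∀ x ∈ DSet α β, ∀ y ∈ DSet α β,
      (PRel (IntervalDom n A α β) f x y ∨ IRel (IntervalDom n A α β) f x y ∨
        PRel (IntervalDom n A α β) f y x) ∧
      ¬ (PRel (IntervalDom n A α β) f x y ∧ IRel (IntervalDom n A α β) f x y) ∧
      ¬ (PRel (IntervalDom n A α β) f x y ∧ PRel (IntervalDom n A α β) f y x) ∧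
      ¬ (IRel (IntervalDom n A α β) f x y ∧ PRel (IntervalDom n A α β) f y x)) ∧
    (∀ x ∈ DSet α β, IRel (IntervalDom n A α β) f x x) ∧
    (∀ x ∈ DSet α β, ∀ y ∈ DSet α β,
      RRel (IntervalDom n A α β) f x y ∨ RRel (IntervalDom n A α β) f y x) ∧
    (∀ x ∈ DSet α β, ∀ y ∈ DSet α β, ∀ z ∈ DSet α β,
      (PRel (IntervalDom n A α β) f x y → PRel (IntervalDom n A α β) f y z →
        PRel (IntervalDom n A α β) f x z) ∧
      (IRel (IntervalDom n A α β) f x y → IRel (IntervalDom n A α β) f y z →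
        IRel (IntervalDom n A α β) f x z) ∧
      (RRel (IntervalDom n A α β) f x y → RRel (IntervalDom n A α β) f y z →
        RRel (IntervalDom n A α β) f x z)) :=
  induced_social_welfare_ordering_general hA α β f hf hneu
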